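/- Let n ≥ 1, let N ≥ 2^(2n) + 1 be an integer, and let a = (a_1, ..., a_n) ∈ ℤ^n with gcd(a_1, ..., a_n, N) = 1. Then the subgroup S = ℤa + Nℤ^n of ℤ^n contains a nonzero vector b with |b|_∞ ≤ N^(1 - 1/(2n)). -/

import Mathlib

/-!
Put `x = N ^ (1/(2n))` and `m = ⌈x⌉`. Since `x ≥ 2`, `m < x + 1 ≤ x ^ 2`, so `m ^ n < N`.
Dirichlet's box principle applied to the residues of `0, a, 2a, …, m ^ n a` mod `N` in the cubes
of side `N / m` gives `k ≠ 0` with `|k| ≤ m ^ n < N` and `b ∈ k a + N ℤ^n` with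
`|b|_∞ < N / m ≤ N / x`. If `b` were `0`, then `N ∣ k a_i` for all `i`, hence `N ∣ k` by the gcd
condition, which is impossible for `0 < |k| < N`.
-/

open Finset

lemma Int.abs_sub_lt_of_ediv_eq {x y N : ℤ} (hN : 0 < N) (h : x / N = y / N) :
    |x - y| < N := by
  have hx := Int.emod_add_mul_ediv x N
  have hy := Int.emod_add_mul_ediv y N
  have := Int.emod_nonneg x hN.ne'
  have := Int.emod_nonneg y hN.ne'
  have := Int.emod_lt_of_pos x hN
  have := Int.emod_lt_of_pos y hN
  rw [h] at hx
  rw [abs_sub_lt_iff]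
  constructor <;> linarith

lemma exists_smul_add_smul_abs_mul_lt {ι : Type*} [Fintype ι] [DecidableEq ι] (a : ι → ℤ)
    {N m : ℕ} (hN : 0 < N) (hm : 0 < m) :
    ∃ k : ℤ, k ≠ 0 ∧ |k| ≤ m ^ Fintype.card ι ∧
      ∃ v : ι → ℤ, ∀ i, |(k • a + (N : ℤ) • v) i| * m < N := by
  let box : ℤ → ι → ℤ := fun c i => c * a i % N * m / N
  have hmaps : Set.MapsTo box ↑(Icc 0 ((m : ℤ) ^ Fintype.card ι))
      ↑(Fintype.piFinset fun _ : ι => Ico 0 (m : ℤ)) := by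
    intro c _
    simp only [Fintype.coe_piFinset, coe_Ico, Set.mem_pi, Set.mem_univ, Set.mem_Ico,
      forall_const]
    intro i
    have hr0 := Int.emod_nonneg (c * a i) (by omega : (N : ℤ) ≠ 0)
    have hrN := Int.emod_lt_of_pos (c * a i) (by omega : (0 : ℤ) < N)
    refine ⟨Int.ediv_nonneg (by positivity) (by positivity), ?_⟩
    rw [Int.ediv_lt_iff_lt_mul (by omega)]
    nlinarith [mul_lt_mul_of_pos_right hrN (by omega : (0 : ℤ) < m)]
  have hcard : #(Fintype.piFinset fun _ : ι => Ico 0 (m : ℤ)) <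
      #(Icc 0 ((m : ℤ) ^ Fintype.card ι)) := by
    simp [Fintype.card_piFinset]
  obtain ⟨c₁, hc₁, c₂, hc₂, hne, hbox⟩ := exists_ne_map_eq_of_card_lt_of_maps_to hcard hmaps
  rw [mem_Icc] at hc₁ hc₂
  refine ⟨c₂ - c₁, sub_ne_zero.mpr hne.symm, abs_sub_le_iff.mpr ⟨by linarith, by linarith⟩,
    fun i => c₁ * a i / N - c₂ * a i / N, fun i => ?_⟩
  have hb : (c₂ - c₁) * a i + N * (c₁ * a i / N - c₂ * a i / N) =
      c₂ * a i % N - c₁ * a i % N := by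
    rw [Int.emod_def, Int.emod_def]; ring
  simp only [Pi.add_apply, Pi.smul_apply, smul_eq_mul, hb]
  rw [← abs_of_nonneg (Int.natCast_nonneg m), ← abs_mul, sub_mul]
  exact Int.abs_sub_lt_of_ediv_eq (by omega) (congrFun hbox i).symm

lemma Int.dvd_of_forall_dvd_mul_of_gcd_eq_one {ι : Type*} (s : Finset ι) {a : ι → ℤ} {N k : ℤ}
    (hgcd : Int.gcd (s.gcd a) N = 1) (h : ∀ i ∈ s, N ∣ k * a i) : N ∣ k := by
  have hN : N ∣ s.gcd fun i => k * a i := Finset.dvd_gcd h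
  rw [(Finset.gcd_mul_left' s a k).dvd_iff_dvd_right] at hN
  exact (Int.isCoprime_iff_gcd_eq_one.mpr (by rwa [Int.gcd_comm])).dvd_of_dvd_mul_right hN

lemma smul_add_natCast_smul_ne_zero {ι : Type*} [Fintype ι] {a : ι → ℤ} {N : ℕ}
    (hgcd : Int.gcd (univ.gcd a) N = 1) {k : ℤ} (hk : k ≠ 0) (hkN : |k| < N) (v : ι → ℤ) :
    k • a + (N : ℤ) • v ≠ 0 := by
  intro hb
  have hdvd : (N : ℤ) ∣ k := Int.dvd_of_forall_dvd_mul_of_gcd_eq_one univ hgcd fun i _ =>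
    ⟨-v i, by simpa [add_eq_zero_iff_eq_neg] using congrFun hb i⟩
  exact (Int.le_of_dvd (abs_pos.mpr hk) ((dvd_abs _ _).mpr hdvd)).not_gt hkN

lemma natCeil_lt_sq {x : ℝ} (hx : 2 ≤ x) : (⌈x⌉₊ : ℝ) < x ^ 2 := by
  nlinarith [Nat.ceil_lt_add_one (by linarith : 0 ≤ x)]

lemma two_le_rpow_inv_natCast {d N : ℕ} (hd : d ≠ 0) (hN : 2 ^ d ≤ N) :
    2 ≤ (N : ℝ) ^ (d : ℝ)⁻¹ :=
  calc (2 : ℝ) = ((2 : ℝ) ^ d) ^ (d : ℝ)⁻¹ := (Real.pow_rpow_inv_natCast (by norm_num) hd).symm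
    _ ≤ (N : ℝ) ^ (d : ℝ)⁻¹ :=
      Real.rpow_le_rpow (by positivity) (by exact_mod_cast hN) (by positivity)

/-- Lemma 1: if `N ≥ 2^(2n)+1` and `gcd(a_1,…,a_n,N) = 1`, the subgroup
`ℤa + Nℤ^n` contains a nonzero vector of sup-norm at most `N^(1-1/(2n))`. -/
theorem stmt_0 (n : ℕ) (hn : 1 ≤ n) (N : ℕ) (hN : 2 ^ (2 * n) + 1 ≤ N)
    (a : Fin n → ℤ)
    (hgcd : Int.gcd (Finset.univ.gcd a) (N : ℤ) = 1) :
    ∃ b : Fin n → ℤ, b ≠ 0 ∧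
      (∃ (k : ℤ) (v : Fin n → ℤ), b = k • a + (N : ℤ) • v) ∧
      ∀ i, (|b i| : ℝ) ≤ (N : ℝ) ^ ((1 : ℝ) - 1 / (2 * n)) := by
  have hd : 2 * n ≠ 0 := by omega
  set x : ℝ := (N : ℝ) ^ ((1 : ℝ) / (2 * n)) with hx
  have hx_inv : x = (N : ℝ) ^ ((2 * n : ℕ) : ℝ)⁻¹ := by rw [hx]; push_cast; rw [one_div]
  have hx2 : 2 ≤ x := hx_inv ▸ two_le_rpow_inv_natCast hd (by omega)
  have hm : 0 < ⌈x⌉₊ := Nat.ceil_pos.mpr (by linarith)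
  have hmN : ⌈x⌉₊ ^ n < N := by
    have h : (⌈x⌉₊ : ℝ) ^ n < N :=
      calc (⌈x⌉₊ : ℝ) ^ n < (x ^ 2) ^ n :=
            pow_lt_pow_left₀ (natCeil_lt_sq hx2) (by positivity) (by omega)
        _ = N := by rw [← pow_mul, hx_inv, Real.rpow_inv_natCast_pow (by positivity) hd]
    exact_mod_cast h
  obtain ⟨k, hk, hkm, v, hv⟩ := exists_smul_add_smul_abs_mul_lt a (by omega : 0 < N) hm
  rw [Fintype.card_fin] at hkm
  refine ⟨k • a + (N : ℤ) • v,
    smul_add_natCast_smul_ne_zero hgcd hk (hkm.trans_lt (by exact_mod_cast hmN)) v,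
    ⟨k, v, rfl⟩, fun i => ?_⟩
  calc (|(k • a + (N : ℤ) • v) i| : ℝ) ≤ N / ⌈x⌉₊ := by
        rw [le_div_iff₀ (by positivity)]; exact_mod_cast (hv i).le
    _ ≤ N / x := div_le_div_of_nonneg_left (by positivity) (by linarith) (Nat.le_ceil x)
    _ = (N : ℝ) ^ ((1 : ℝ) - 1 / (2 * n)) := by
        rw [Real.rpow_sub (by norm_cast; omega), Real.rpow_one]
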